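/- Let Y_i = Pᵀ A_i P for i = 1,2,3, where P is the centering projection in ℝ³ and A₁, A₂, A₃ are the harmonic matrices of the Sierpinski gasket. Then the operator norm (largest singular value) of each Y_i is 3/5, and consequently for every word ω₁…ω_m the trace satisfies tr(Y_{[ω]_m}ᵀ Y_{[ω]_m}) ≤ 3·(3/5)^{2m}, where Y_{[ω]_m} = Y_{ω_m}···Y_{ω_1}. -/

import Mathlib

open Matrix
noncomputable def Pproj : Matrix (Fin 3) (Fin 3) ℝ :=
  Matrix.of fun i j => (if i = j then (1:ℝ) else 0) - 1/3

noncomputable def Amat : Fin 3 → Matrix (Fin 3) (Fin 3) ℝ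
  | 0 => (1/5 : ℝ) • Matrix.of ![![5, 0, 0], ![2, 2, 1], ![2, 1, 2]]
  | 1 => (1/5 : ℝ) • Matrix.of ![![2, 2, 1], ![0, 5, 0], ![1, 2, 2]]
  | 2 => (1/5 : ℝ) • Matrix.of ![![2, 1, 2], ![1, 2, 2], ![0, 0, 5]]

noncomputable def Ymat (i : Fin 3) : Matrix (Fin 3) (Fin 3) ℝ :=
  Pprojᵀ * Amat i * Pproj

lemma euclid_apply (A : Matrix (Fin 3) (Fin 3) ℝ) (x : EuclideanSpace ℝ (Fin 3)) (j : Fin 3) :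
    (toEuclideanCLM (𝕜 := ℝ) A x) j = A.mulVec x j := rfl

lemma sq_norm_euclid (y : EuclideanSpace ℝ (Fin 3)) :
    ‖y‖ ^ 2 = (y 0) ^ 2 + (y 1) ^ 2 + (y 2) ^ 2 := by
  rw [EuclideanSpace.norm_eq, Real.sq_sqrt (by positivity)]
  simp [Fin.sum_univ_three, sq_abs]

lemma ub_aux (A : Matrix (Fin 3) (Fin 3) ℝ) (c : ℝ) (hc : 0 ≤ c)
    (h : ∀ x : Fin 3 → ℝ,
      (A.mulVec x 0) ^ 2 + (A.mulVec x 1) ^ 2 + (A.mulVec x 2) ^ 2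
        ≤ c ^ 2 * ((x 0) ^ 2 + (x 1) ^ 2 + (x 2) ^ 2)) :
    ∀ x : EuclideanSpace ℝ (Fin 3), ‖toEuclideanCLM (𝕜 := ℝ) A x‖ ≤ c * ‖x‖ := by
  intro x
  have h1 : ‖toEuclideanCLM (𝕜 := ℝ) A x‖ ^ 2 ≤ (c * ‖x‖) ^ 2 := by
    rw [sq_norm_euclid, mul_pow, sq_norm_euclid]
    have := h (WithLp.equiv 2 _ x)
    simpa [euclid_apply] using this
  have h2 : 0 ≤ c * ‖x‖ := by positivity
  nlinarith [norm_nonneg (toEuclideanCLM (𝕜 := ℝ) A x)]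

lemma norm_eq_of (A : Matrix (Fin 3) (Fin 3) ℝ) (v : EuclideanSpace ℝ (Fin 3)) (c : ℝ)
    (hc : 0 ≤ c) (hv : v ≠ 0)
    (hub : ∀ x : EuclideanSpace ℝ (Fin 3), ‖toEuclideanCLM (𝕜 := ℝ) A x‖ ≤ c * ‖x‖)
    (heig : toEuclideanCLM (𝕜 := ℝ) A v = c • v) :
    ‖toEuclideanCLM (𝕜 := ℝ) A‖ = c := by
  refine le_antisymm (ContinuousLinearMap.opNorm_le_bound _ hc hub) ?_
  have h1 := (toEuclideanCLM (𝕜 := ℝ) A).le_opNorm v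
  rw [heig, norm_smul, Real.norm_eq_abs, abs_of_nonneg hc] at h1
  have hv' : 0 < ‖v‖ := norm_pos_iff.mpr hv
  exact le_of_mul_le_mul_right h1 hv'

lemma Ymat_eq : ∀ i : Fin 3, Ymat i = (1/5 : ℝ) • Matrix.of
    (![![![2,-1,-1],![-1,1,0],![-1,0,1]], ![![1,-1,0],![-1,2,-1],![0,-1,1]],
      ![![1,0,-1],![0,1,-1],![-1,-1,2]]] i) := by
  intro i
  fin_cases i <;>
  · ext a b
    fin_cases a <;> fin_cases b <;>
      · simp [Ymat, Amat, Pproj, Matrix.mul_apply, Fin.sum_univ_three, Matrix.vecHead, Matrix.vecTail]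
        norm_num

lemma normY (i : Fin 3) : ‖Matrix.toEuclideanCLM (𝕜 := ℝ) (Ymat i)‖ = 3/5 := by
  have key : ∀ v : Fin 3 → ℝ, v ≠ 0 →
      (∀ x : Fin 3 → ℝ,
        ((Ymat i).mulVec x 0) ^ 2 + ((Ymat i).mulVec x 1) ^ 2 + ((Ymat i).mulVec x 2) ^ 2
          ≤ (3/5 : ℝ) ^ 2 * ((x 0) ^ 2 + (x 1) ^ 2 + (x 2) ^ 2)) →
      (Ymat i).mulVec v = (3/5 : ℝ) • v →
      ‖Matrix.toEuclideanCLM (𝕜 := ℝ) (Ymat i)‖ = 3/5 := by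
    intro v hv hub heig
    refine norm_eq_of _ ((WithLp.equiv 2 _).symm v) _ (by norm_num) ?_
      (ub_aux _ _ (by norm_num) hub) ?_
    · simpa using hv
    · ext j
      rw [euclid_apply]
      show (Ymat i).mulVec v j = ((3/5 : ℝ) • v) j
      rw [heig]
  have hY := Ymat_eq i
  fin_cases i
  · refine key ![2,-1,-1] (by intro h; have := congrFun h 0; norm_num at this) ?_ ?_ <;>
      simp only [hY] <;>
      [ (intro x; simp [Matrix.mulVec, dotProduct, Fin.sum_univ_three];
         nlinarith [sq_nonneg (x 0 + x 1 + x 2), sq_nonneg (x 1 - x 2)]);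
        (funext j; fin_cases j <;>
          simp [Matrix.mulVec, dotProduct, Fin.sum_univ_three] <;> norm_num)]
  · refine key ![-1,2,-1] (by intro h; have := congrFun h 1; norm_num at this) ?_ ?_ <;>
      simp only [hY] <;>
      [ (intro x; simp [Matrix.mulVec, dotProduct, Fin.sum_univ_three];
         nlinarith [sq_nonneg (x 0 + x 1 + x 2), sq_nonneg (x 0 - x 2)]);
        (funext j; fin_cases j <;>
          simp [Matrix.mulVec, dotProduct, Fin.sum_univ_three] <;> norm_num)]
  · refine key ![-1,-1,2] (by intro h; have := congrFun h 0; norm_num at this) ?_ ?_ <;>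
      simp only [hY] <;>
      [ (intro x; simp [Matrix.mulVec, dotProduct, Fin.sum_univ_three];
         nlinarith [sq_nonneg (x 0 + x 1 + x 2), sq_nonneg (x 0 - x 1)]);
        (funext j; fin_cases j <;>
          simp [Matrix.mulVec, dotProduct, Fin.sum_univ_three] <;> norm_num)]

lemma normProd (ω : List (Fin 3)) :
    ‖Matrix.toEuclideanCLM (𝕜 := ℝ) ((ω.map Ymat).prod)‖ ≤ (3/5 : ℝ) ^ ω.length := by
  induction ω with
  | nil => simp [_root_.map_one]
  | cons a l ih =>
    rw [List.map_cons, List.prod_cons, _root_.map_mul]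
    calc ‖toEuclideanCLM (𝕜 := ℝ) (Ymat a) * toEuclideanCLM (𝕜 := ℝ) ((l.map Ymat).prod)‖
        ≤ ‖toEuclideanCLM (𝕜 := ℝ) (Ymat a)‖ * ‖toEuclideanCLM (𝕜 := ℝ) ((l.map Ymat).prod)‖ :=
          norm_mul_le _ _
      _ ≤ (3/5) * (3/5 : ℝ) ^ l.length := by
          rw [normY a]
          exact mul_le_mul_of_nonneg_left ih (by norm_num)
      _ = (3/5 : ℝ) ^ (a :: l).length := by rw [List.length_cons, pow_succ']

theorem stmt_11 :
    (∀ i : Fin 3, ‖Matrix.toEuclideanCLM (𝕜 := ℝ) (Ymat i)‖ = 3/5) ∧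
    ∀ ω : List (Fin 3),
      Matrix.trace (((ω.map Ymat).prod)ᵀ * (ω.map Ymat).prod)
        ≤ 3 * ((3:ℝ)/5) ^ (2 * ω.length) := by
  refine ⟨normY, fun ω => ?_⟩
  set M := (ω.map Ymat).prod with hM
  set T := toEuclideanCLM (𝕜 := ℝ) M with hT
  have hcol : ∀ i : Fin 3, ∑ j, (M j i) ^ 2 ≤ ‖T‖ ^ 2 := by
    intro i
    have h1 : ∀ j, (T (EuclideanSpace.single i 1)) j = M j i := by
      intro j
      rw [euclid_apply]
      show M.mulVec (Pi.single i 1) j = M j i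
      rw [Matrix.mulVec_single]
      simp
    have h2 : ‖T (EuclideanSpace.single i 1)‖ ≤ ‖T‖ := by
      have := T.le_opNorm (EuclideanSpace.single i 1)
      simpa [EuclideanSpace.norm_single] using this
    have h3 : ‖T (EuclideanSpace.single i 1)‖ ^ 2 ≤ ‖T‖ ^ 2 :=
      pow_le_pow_left₀ (norm_nonneg _) h2 2
    rw [sq_norm_euclid] at h3
    simpa [Fin.sum_univ_three, h1] using h3
  have htr : Matrix.trace (Mᵀ * M) = ∑ i, ∑ j, (M j i) ^ 2 := by
    simp [Matrix.trace, Matrix.mul_apply, Matrix.diag, sq]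
  have hnorm : ‖T‖ ≤ (3/5 : ℝ) ^ ω.length := normProd ω
  have hTnn : (0:ℝ) ≤ ‖T‖ := norm_nonneg _
  have h4 : ‖T‖ ^ 2 ≤ ((3/5 : ℝ) ^ ω.length) ^ 2 := pow_le_pow_left₀ hTnn hnorm 2
  have h5 : ((3/5 : ℝ) ^ ω.length) ^ 2 = ((3:ℝ)/5) ^ (2 * ω.length) := by
    rw [← pow_mul, mul_comm]
  calc Matrix.trace (Mᵀ * M) = ∑ i, ∑ j, (M j i) ^ 2 := htr
    _ ≤ ∑ _i : Fin 3, ‖T‖ ^ 2 := Finset.sum_le_sum fun i _ => hcol i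
    _ = 3 * ‖T‖ ^ 2 := by rw [Fin.sum_univ_three]; ring
    _ ≤ 3 * ((3:ℝ)/5) ^ (2 * ω.length) := by rw [← h5]; linarith
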